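/- (The deleted-columns bracket divides the determinant.) Let S be a list of m ≥ 1 triplets on an index set I ⊆ {1,…,n} with |I| = m+2, and let a, b ∈ I be distinct. Then the polynomial ⟨ab⟩ divides det(M_{ab}(S)) in the polynomial ring R. -/

import Mathlib

open MvPolynomial

/-- The polynomial ring `ℚ[X_{m,i} : m ∈ {1,2}, 1 ≤ i ≤ n]` in `2n` indeterminates. -/
abbrev MHV.Poly (n : ℕ) := MvPolynomial (Fin 2 × Fin n) ℚ

/-- The field of fractions `ℚ(X)`. -/
abbrev MHV.FF (n : ℕ) := FractionRing (MHV.Poly n)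

namespace MHV

variable {n : ℕ}

/-- The bracket `⟨ij⟩ = X_{1,i}·X_{2,j} − X_{1,j}·X_{2,i}`. -/
noncomputable def bra (i j : Fin n) : Poly n :=
  X ((0 : Fin 2), i) * X ((1 : Fin 2), j) - X ((0 : Fin 2), j) * X ((1 : Fin 2), i)

/-- A triplet: an ordered triple of indices. -/
abbrev Triplet (n : ℕ) := Fin n × Fin n × Fin n

/-- The entries of a triplet are pairwise distinct. -/
def Triplet.Distinct (t : Triplet n) : Prop :=
  t.1 ≠ t.2.1 ∧ t.1 ≠ t.2.2 ∧ t.2.1 ≠ t.2.2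

/-- The set of indices used by a triplet. -/
def Triplet.indices (t : Triplet n) : Finset (Fin n) := {t.1, t.2.1, t.2.2}

/-- A triplet on the index set `I`: pairwise distinct entries, all belonging to `I`. -/
def Triplet.OnSet (I : Finset (Fin n)) (t : Triplet n) : Prop :=
  t.Distinct ∧ t.indices ⊆ I

/-- The row of the matrix `M(S)` corresponding to the triplet `t = (a,b,c)`:
entry `⟨bc⟩` in column `a`, `⟨ca⟩` in column `b`, `⟨ab⟩` in column `c`, `0` elsewhere. -/
noncomputable def rowEntry (t : Triplet n) (c : Fin n) : Poly n :=
  if c = t.1 then bra t.2.1 t.2.2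
  else if c = t.2.1 then bra t.2.2 t.1
  else if c = t.2.2 then bra t.1 t.2.1
  else 0

/-- The determinant of the matrix whose rows are indexed by the triplets of `S` and
whose columns are the columns of `M(S)` belonging to `cols` (in increasing order). -/
noncomputable def detCols (S : List (Triplet n)) (cols : Finset (Fin n)) : Poly n :=
  Matrix.det (Matrix.of fun r c : Fin S.length =>
    ((cols.sort (· ≤ ·))[c.1]?).elim 0 (rowEntry (S.get r)))

/-- The determinant of `M_{ab}(S)`: the matrix `M(S)` (columns indexed by `I`)
with columns `a` and `b` deleted. -/
noncomputable def Mdet (S : List (Triplet n)) (I : Finset (Fin n)) (a b : Fin n) : Poly n :=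
  detCols S ((I.erase a).erase b)

/-- The product `∏_{(a,b,c) ∈ S} ⟨ab⟩·⟨bc⟩·⟨ca⟩`. -/
noncomputable def denom (S : List (Triplet n)) : Poly n :=
  (S.map fun t => bra t.1 t.2.1 * bra t.2.1 t.2.2 * bra t.2.2 t.1).prod

/-- The canonical map from the polynomial ring to its field of fractions. -/
noncomputable def toFF : Poly n →+* FF n := algebraMap (Poly n) (FF n)

/-- The form `f_S = det(M_{ab}(S))² / (⟨ab⟩² · ∏_{(a,b,c) ∈ S} ⟨ab⟩⟨bc⟩⟨ca⟩)`,
where `(a,b)` is the pair of the two smallest elements of `I`. -/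
noncomputable def fForm (S : List (Triplet n)) (I : Finset (Fin n)) : FF n :=
  if h : 2 ≤ I.card then
    have h1 : I.Nonempty := Finset.card_pos.mp (by omega)
    have h2 : (I.erase (I.min' h1)).Nonempty := by
      rw [← Finset.card_pos, Finset.card_erase_of_mem (I.min'_mem h1)]; omega
    toFF (Mdet S I (I.min' h1) ((I.erase (I.min' h1)).min' h2)) ^ 2 /
      (toFF (bra (I.min' h1) ((I.erase (I.min' h1)).min' h2)) ^ 2 * toFF (denom S))
  else 0

/-- The set of all indices used by the triplets of `S`. -/
def indexSet (S : List (Triplet n)) : Finset (Fin n) :=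
  S.foldr (fun t acc => t.indices ∪ acc) ∅

/-- The non-vanishing condition: every nonempty subcollection consisting of `d` triplets
contains at least `d+2` distinct indices in total. -/
def NonVanishing (T : List (Triplet n)) : Prop :=
  ∀ S : List (Triplet n), S.Sublist T → S ≠ [] → S.length + 2 ≤ (indexSet S).card

/-- An MHV collection on `{1,…,n}`: a list of `n−2` triplets with pairwise
distinct entries (triplets on the full index set). -/
def IsMHV (n : ℕ) (T : List (Triplet n)) : Prop :=
  T.length = n - 2 ∧ ∀ t ∈ T, t.Distinct

/-- The unordered pair `{i,j}` belongs to the doublet set `D(T)`: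
`i` and `j` occur together in an odd number of triplets of `T`. -/
def InDoublets (T : List (Triplet n)) (i j : Fin n) : Prop :=
  Odd (T.countP fun t => decide (i ∈ t.indices ∧ j ∈ t.indices))

end MHV


lemma mvPrime_X {σ : Type*} (v : σ) : Prime (X v : MvPolynomial σ ℚ) := by
  classical
  let e := (renameEquiv ℚ (Equiv.optionSubtypeNe v).symm).trans
    (optionEquivLeft ℚ {x : σ // x ≠ v})
  rw [← MulEquiv.prime_iff e.toMulEquiv]
  have h : e.toMulEquiv (X v) = Polynomial.X := by
    show e (X v) = Polynomial.X
    simp [e, renameEquiv_apply, rename_X, Equiv.optionSubtypeNe_symm_self,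
      optionEquivLeft_X_none]
  rw [h]
  exact Polynomial.prime_X

lemma irreducible_linear {A : Type*} [CommRing A] [IsDomain A] {c d : A}
    (hc : c ≠ 0) (h : ∀ r : A, r ∣ c → r ∣ d → IsUnit r) :
    Irreducible (Polynomial.C c * Polynomial.X - Polynomial.C d) := by
  have hdeg : (Polynomial.C c * Polynomial.X - Polynomial.C d).natDegree = 1 := by
    rw [sub_eq_add_neg, ← Polynomial.C_neg]
    exact Polynomial.natDegree_linear hc
  have hc1 : (Polynomial.C c * Polynomial.X - Polynomial.C d).coeff 1 = c := by simp
  have hc0 : (Polynomial.C c * Polynomial.X - Polynomial.C d).coeff 0 = -d := by simp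
  set q := Polynomial.C c * Polynomial.X - Polynomial.C d with hq
  have hq0 : q ≠ 0 := fun h0 => by simp [h0] at hdeg
  constructor
  · intro hu
    have := Polynomial.natDegree_eq_zero_of_isUnit hu
    omega
  · intro f g hfg
    have hf0 : f ≠ 0 := fun h0 => hq0 (by rw [hfg, h0, zero_mul])
    have hg0 : g ≠ 0 := fun h0 => hq0 (by rw [hfg, h0, mul_zero])
    have hsum : f.natDegree + g.natDegree = 1 := by
      rw [← Polynomial.natDegree_mul hf0 hg0, ← hfg, hdeg]
    have key : ∀ p : Polynomial A, Polynomial.C (p.coeff 0) ∣ q → p.natDegree = 0 → IsUnit p := by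
      intro p hdvd hp0
      rw [Polynomial.eq_C_of_natDegree_eq_zero hp0]
      rw [Polynomial.C_dvd_iff_dvd_coeff] at hdvd
      exact Polynomial.isUnit_C.mpr
        (h _ (hc1 ▸ hdvd 1) ((dvd_neg).mp (hc0 ▸ hdvd 0)))
    rcases Nat.eq_zero_or_pos f.natDegree with hf | hf
    · refine Or.inl (key f ?_ hf)
      rw [← Polynomial.eq_C_of_natDegree_eq_zero hf]
      exact Dvd.intro g hfg.symm
    · have hg : g.natDegree = 0 := by omega
      refine Or.inr (key g ?_ hg)
      rw [← Polynomial.eq_C_of_natDegree_eq_zero hg]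
      exact Dvd.intro_left f hfg.symm

namespace Stmt13Aux

open MvPolynomial

lemma prime_bra {n : ℕ} {a b : Fin n} (hab : a ≠ b) : Prime (MHV.bra a b) := by
  classical
  have h1 : ((0 : Fin 2), a) ≠ ((1 : Fin 2), b) := by simp [Prod.ext_iff]
  have h2 : ((0 : Fin 2), b) ≠ ((1 : Fin 2), b) := by simp [Prod.ext_iff]
  have h3 : ((1 : Fin 2), a) ≠ ((1 : Fin 2), b) := by simp [Prod.ext_iff, hab]
  let e := (renameEquiv ℚ (Equiv.optionSubtypeNe ((1 : Fin 2), b)).symm).trans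
    (optionEquivLeft ℚ {x : Fin 2 × Fin n // x ≠ ((1 : Fin 2), b)})
  rw [← MulEquiv.prime_iff e.toMulEquiv]
  have he : e.toMulEquiv (MHV.bra a b)
      = Polynomial.C (X ⟨((0 : Fin 2), a), h1⟩) * Polynomial.X
        - Polynomial.C (X ⟨((0 : Fin 2), b), h2⟩ * X ⟨((1 : Fin 2), a), h3⟩) := by
    show e (MHV.bra a b) = _
    rw [MHV.bra]
    simp only [e, map_sub, map_mul, AlgEquiv.trans_apply, renameEquiv_apply, rename_X]
    rw [Equiv.optionSubtypeNe_symm_self, Equiv.optionSubtypeNe_symm_of_ne h1,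
      Equiv.optionSubtypeNe_symm_of_ne h2, Equiv.optionSubtypeNe_symm_of_ne h3]
    rw [optionEquivLeft_X_none, optionEquivLeft_X_some, optionEquivLeft_X_some,
      optionEquivLeft_X_some]
  rw [he]
  apply UniqueFactorizationMonoid.irreducible_iff_prime.mp
  apply irreducible_linear (MvPolynomial.X_ne_zero _)
  intro r hr1 hr2
  obtain ⟨s, hs⟩ := hr1
  rcases (mvPrime_X _).irreducible.isUnit_or_isUnit hs with h | h
  · exact h
  · exfalso
    have hAs : Associated r (X ⟨((0 : Fin 2), a), h1⟩) :=
      ⟨h.unit, by rw [IsUnit.unit_spec]; exact hs.symm⟩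
    obtain ⟨t, ht⟩ := hAs.symm.dvd.trans hr2
    have := congrArg (eval (fun u : {x : Fin 2 × Fin n // x ≠ ((1 : Fin 2), b)} =>
      if u.1 = ((0 : Fin 2), a) then (0 : ℚ) else 1)) ht
    rw [eval_mul, eval_mul, eval_X, eval_X, eval_X] at this
    rw [if_pos rfl, if_neg (by simp [Prod.ext_iff]; exact fun h => absurd h hab.symm),
      if_neg (by simp [Prod.ext_iff])] at this
    norm_num at this

/-- The kernel-vector entries. -/
noncomputable def Vv {n : ℕ} (a i : Fin n) : MHV.Poly n :=
  X ((1 : Fin 2), a) * X ((0 : Fin 2), i) - X ((0 : Fin 2), a) * X ((1 : Fin 2), i)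

lemma rowEntry_eq_zero {n : ℕ} {t : MHV.Triplet n} {i : Fin n}
    (hi : i ∉ t.indices) : MHV.rowEntry t i = 0 := by
  simp only [MHV.Triplet.indices, Finset.mem_insert, Finset.mem_singleton, not_or] at hi
  rw [MHV.rowEntry, if_neg hi.1, if_neg hi.2.1, if_neg hi.2.2]

lemma schouten_sum {n : ℕ} (a : Fin n) (t : MHV.Triplet n) (ht : t.Distinct)
    (I : Finset (Fin n)) (hsub : t.indices ⊆ I) :
    ∑ i ∈ I, MHV.rowEntry t i * Vv a i = 0 := by
  classical
  rw [← Finset.sum_subset hsub (fun i _ hi => by rw [rowEntry_eq_zero hi, zero_mul])]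
  obtain ⟨p, q, r⟩ := t
  obtain ⟨hpq, hpr, hqr⟩ := ht
  simp only [MHV.Triplet.Distinct] at hpq hpr hqr
  rw [show MHV.Triplet.indices (p, q, r) = {p, q, r} from rfl]
  rw [Finset.sum_insert (by simp [hpq, hpr]),
    Finset.sum_insert (by simp [hqr]), Finset.sum_singleton]
  have e1 : MHV.rowEntry (p, q, r) p = MHV.bra q r := by
    rw [MHV.rowEntry, if_pos rfl]
  have e2 : MHV.rowEntry (p, q, r) q = MHV.bra r p := by
    rw [MHV.rowEntry, if_neg (Ne.symm hpq), if_pos rfl]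
  have e3 : MHV.rowEntry (p, q, r) r = MHV.bra p q := by
    rw [MHV.rowEntry, if_neg (Ne.symm hpr), if_neg (Ne.symm hqr), if_pos rfl]
  rw [e1, e2, e3]
  simp only [MHV.bra, Vv]
  ring

end Stmt13Aux

/-- the deleted-columns bracket divides the determinant: for a list `S` of
`m ≥ 1` triplets on an index set `I` with `|I| = m+2` and distinct `a, b ∈ I`, the
polynomial `⟨ab⟩` divides `det(M_{ab}(S))`. -/
theorem statement13 {n : ℕ} (hn : 3 ≤ n)
    (S : List (MHV.Triplet n)) (I : Finset (Fin n))
    (hS : S ≠ []) (hcard : I.card = S.length + 2)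
    (hon : ∀ t ∈ S, MHV.Triplet.OnSet I t)
    (a b : Fin n) (ha : a ∈ I) (hb : b ∈ I) (hab : a ≠ b) :
    MHV.bra a b ∣ MHV.Mdet S I a b := by
  classical
  have hbI : b ∈ I.erase a := Finset.mem_erase.mpr ⟨hab.symm, hb⟩
  set J := (I.erase a).erase b with hJdef
  have hJcard : J.card = S.length := by
    rw [hJdef, Finset.card_erase_of_mem hbI, Finset.card_erase_of_mem ha]
    omega
  set L := J.sort (· ≤ ·) with hLdef
  have hL : L.length = S.length := by rw [hLdef, Finset.length_sort, hJcard]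
  have hm0 : 0 < S.length := List.length_pos_iff.mpr hS
  set M : Matrix (Fin S.length) (Fin S.length) (MHV.Poly n) :=
    Matrix.of fun r c => MHV.rowEntry (S.get r) (L.get (Fin.cast hL.symm c)) with hMdef
  have hdet : MHV.Mdet S I a b = M.det := by
    rw [MHV.Mdet, MHV.detCols]
    congr 1
    refine Matrix.ext fun r c => ?_
    have hc : (c : ℕ) < (Finset.sort (α := Fin n) ((I.erase a).erase b) (· ≤ ·)).length := by
      rw [Finset.length_sort]
      have : ((I.erase a).erase b).card = S.length := hJcard
      omega
    rw [Matrix.of_apply, List.getElem?_eq_getElem hc]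
    rfl
  set vv : Fin S.length → MHV.Poly n :=
    fun c => Stmt13Aux.Vv a (L.get (Fin.cast hL.symm c)) with hvv
  set w : Fin S.length → MHV.Poly n := fun r => MHV.rowEntry (S.get r) b with hw
  have hrowJ : ∀ t : MHV.Triplet n, MHV.Triplet.OnSet I t →
      ∑ i ∈ J, MHV.rowEntry t i * Stmt13Aux.Vv a i
        = MHV.bra a b * MHV.rowEntry t b := by
    intro t ht
    have h0 := Stmt13Aux.schouten_sum a t ht.1 I ht.2
    have e1 := Finset.sum_erase_add I (fun i => MHV.rowEntry t i * Stmt13Aux.Vv a i) ha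
    have e2 := Finset.sum_erase_add (I.erase a)
      (fun i => MHV.rowEntry t i * Stmt13Aux.Vv a i) hbI
    rw [h0] at e1
    rw [hJdef, eq_sub_of_add_eq e2, eq_sub_of_add_eq e1]
    simp only [Stmt13Aux.Vv, MHV.bra]
    ring
  have hmem : ∀ c : Fin S.length, L.get (Fin.cast hL.symm c) ∈ J := by
    intro c
    exact (Finset.mem_sort _).mp (List.get_mem L (Fin.cast hL.symm c))
  have hnodup : L.Nodup := Finset.sort_nodup _ _
  have hMv : M.mulVec vv = fun r => MHV.bra a b * w r := by
    funext r
    show ∑ c, M r c * vv c = _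
    rw [← hrowJ (S.get r) (hon _ (List.get_mem S r))]
    refine Finset.sum_bij (fun c _ => L.get (Fin.cast hL.symm c)) ?_ ?_ ?_ ?_
    · intro c _
      exact hmem c
    · intro c₁ _ c₂ _ h
      have h2 := hnodup.get_inj_iff.mp h
      have h3 := congrArg (fun x : Fin L.length => x.val) h2
      exact Fin.ext h3
    · intro x hx
      have hxL : x ∈ L := (Finset.mem_sort _).mpr hx
      obtain ⟨i, hi⟩ := List.mem_iff_get.mp hxL
      exact ⟨Fin.cast hL i, Finset.mem_univ _, hi⟩
    · intro c _
      rfl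
  have h1 : M.adjugate.mulVec (M.mulVec vv) = M.det • vv := by
    rw [Matrix.mulVec_mulVec, Matrix.adjugate_mul, Matrix.smul_mulVec,
      Matrix.one_mulVec]
  rw [hMv] at h1
  rw [show (fun r => MHV.bra a b * w r) = MHV.bra a b • w from rfl,
    Matrix.mulVec_smul] at h1
  set i0 := L.get (Fin.cast hL.symm ⟨0, hm0⟩) with hi0def
  have hkey : MHV.bra a b ∣ M.det * Stmt13Aux.Vv a i0 := by
    have h2 := congrFun h1 ⟨0, hm0⟩
    simp only [Pi.smul_apply, smul_eq_mul] at h2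
    exact ⟨M.adjugate.mulVec w ⟨0, hm0⟩, h2.symm⟩
  have hi0J : i0 ∈ J := hmem ⟨0, hm0⟩
  have hi0b : i0 ≠ b := (Finset.mem_erase.mp hi0J).1
  have hi0a : i0 ≠ a := (Finset.mem_erase.mp (Finset.mem_erase.mp hi0J).2).1
  have hndvd : ¬ MHV.bra a b ∣ Stmt13Aux.Vv a i0 := by
    rintro ⟨g, hg⟩
    have f10 : (1 : Fin 2) ≠ 0 := by decide
    have f01 : (0 : Fin 2) ≠ 1 := by decide
    have heval := congrArg (eval (fun u : Fin 2 × Fin n =>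
      if u = ((0 : Fin 2), a) then (1 : ℚ) else if u = ((1 : Fin 2), i0) then 1 else 0)) hg
    simp only [Stmt13Aux.Vv, MHV.bra, eval_mul, eval_sub, eval_X] at heval
    simp [Prod.mk.injEq, f10, f01, hi0a, Ne.symm hi0a,
      Ne.symm hi0b, Ne.symm hab] at heval
  rcases (Stmt13Aux.prime_bra hab).2.2 _ _ hkey with h | h
  · rwa [hdet]
  · exact absurd h hndvd
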